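/- The orthogonal regression slope lies between the two conjugate classical regression slopes: for 2D data with positive covariance s_xy > 0 and positive variances, the slope m of the orthogonal regression line through the centroid satisfies s_xy/s_xx ≤ m ≤ s_yy/s_xy, i.e., the TLS line lies within the 'scissors' formed by the y-on-x regression line (slope s_xy/s_xx) and the x-on-y regression line (slope s_yy/s_xy). -/

import Mathlib

/-!
The slope `m` is the positive root of `sxy t² - (syy - sxx) t - sxy = 0`, i.e. the unique
`t > 0` with `t - t⁻¹ = (syy - sxx) / sxy`. Since `t ↦ t - t⁻¹` is strictly increasing on
`(0, ∞)`, comparing `m` with `sxy / sxx` and with `syy / sxy` reduces to comparing the values of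
this function, and both comparisons become the Cauchy–Schwarz inequality `sxy² ≤ sxx syy`.
-/

open Real

theorem strictMonoOn_sub_inv : StrictMonoOn (fun t : ℝ => t - t⁻¹) (Set.Ioi 0) :=
  fun _ hs _ ht hst => sub_lt_sub hst ((inv_lt_inv₀ ht hs).mpr hst)

theorem sub_inv_eq_of_eq_pos_root {c d m : ℝ} (hc : 0 < c)
    (hm : m = (d + √(d ^ 2 + 4 * c ^ 2)) / (2 * c)) : 0 < m ∧ m - m⁻¹ = d / c := by
  set s := √(d ^ 2 + 4 * c ^ 2)
  have hs : s ^ 2 = d ^ 2 + 4 * c ^ 2 := sq_sqrt (by positivity)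
  have hds : 0 < d + s := by nlinarith [sqrt_nonneg (d ^ 2 + 4 * c ^ 2), sq_nonneg (s - d)]
  have hm0 : 0 < m := hm ▸ by positivity
  refine ⟨hm0, ?_⟩
  rw [hm] at hm0 ⊢
  field_simp
  linear_combination hs

theorem div_le_and_le_div_of_sub_inv_eq {a b c m : ℝ} (ha : 0 < a) (hc : 0 < c)
    (hcs : c ^ 2 ≤ a * b) (hm : 0 < m) (hmm : m - m⁻¹ = (b - a) / c) :
    c / a ≤ m ∧ m ≤ b / c := by
  have hb : 0 < b := pos_of_mul_pos_right (lt_of_lt_of_le (by positivity) hcs) ha.le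
  constructor
  · refine (strictMonoOn_sub_inv.le_iff_le (by positivity : (0 : ℝ) < c / a) hm).mp ?_
    simp only [hmm, inv_div, sub_div]
    exact sub_le_sub_right ((div_le_div_iff₀ ha hc).mpr (by nlinarith)) _
  · refine (strictMonoOn_sub_inv.le_iff_le hm (by positivity : (0 : ℝ) < b / c)).mp ?_
    simp only [hmm, inv_div, sub_div]
    exact sub_le_sub_left ((div_le_div_iff₀ hb hc).mpr (by nlinarith)) _

theorem stmt_17_general (n : ℕ) (x y : Fin n → ℝ) (xbar ybar sxx syy sxy m : ℝ)
    (hsxx : sxx = ∑ i, (x i - xbar) ^ 2)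
    (hsyy : syy = ∑ i, (y i - ybar) ^ 2)
    (hsxy : sxy = ∑ i, (x i - xbar) * (y i - ybar))
    (hxx : 0 < sxx) (hxy : 0 < sxy)
    (hm : m = (syy - sxx + Real.sqrt ((syy - sxx) ^ 2 + 4 * sxy ^ 2)) / (2 * sxy)) :
    sxy / sxx ≤ m ∧ m ≤ syy / sxy := by
  have hcs : sxy ^ 2 ≤ sxx * syy := by
    rw [hsxx, hsyy, hsxy]
    exact Finset.sum_mul_sq_le_sq_mul_sq _ _ _
  obtain ⟨hm0, hmm⟩ := sub_inv_eq_of_eq_pos_root hxy hm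
  exact div_le_and_le_div_of_sub_inv_eq hxx hxy hcs hm0 hmm

/-- The orthogonal regression slope lies between the two conjugate classical
regression slopes. -/
theorem stmt_17 (n : ℕ) (x y : Fin n → ℝ) (xbar ybar sxx syy sxy m : ℝ)
    (hx : xbar = (∑ i, x i) / n) (hy : ybar = (∑ i, y i) / n)
    (hsxx : sxx = ∑ i, (x i - xbar) ^ 2)
    (hsyy : syy = ∑ i, (y i - ybar) ^ 2)
    (hsxy : sxy = ∑ i, (x i - xbar) * (y i - ybar))
    (hxx : 0 < sxx) (hyy : 0 < syy) (hxy : 0 < sxy)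
    (hm : m = (syy - sxx + Real.sqrt ((syy - sxx) ^ 2 + 4 * sxy ^ 2)) / (2 * sxy)) :
    sxy / sxx ≤ m ∧ m ≤ syy / sxy :=
  stmt_17_general n x y xbar ybar sxx syy sxy m hsxx hsyy hsxy hxx hxy hm
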